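/- Define, for orthogonal U ∈ ℝ^{d×d} and γ ∈ (0,1), the function Q*(s,a,g) on states s = (s¹; s²) ∈ ℝ^{2d}, actions a, goals g ∈ ℝ^d by: Q*(s,a,g) = γ gᵀ(s¹+Ua)/(1-γ²) + γ³‖g‖₂/(1-γ²)² if s¹ ≠ 0, and Q*(s,a,g) = gᵀs²/(1-γ²) + γ²‖g‖₂/(1-γ²)² if s¹ = 0. Then with π*(s,g) = Uᵀg/‖g‖₂ (g ≠ 0), Q* satisfies the Bellman equation Q*(s,a,g) = R(s',g) + γ Q*(s', π*(s',g), g) for the two-phase transition: if s¹ ≠ 0 then s' = (0; s¹+Ua), else s' = (s²; 0); with reward R(s,g) = gᵀ s¹. -/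

import Mathlib

open RealInnerProductSpace
open Classical

/-- Identification of `Fin d → ℝ` with Euclidean space `ℝ^d` (with the `ℓ²` norm). -/
noncomputable def toEuc {d : ℕ} (v : Fin d → ℝ) : EuclideanSpace ℝ (Fin d) :=
  (WithLp.equiv 2 (Fin d → ℝ)).symm v

/-- The optimal Q-function of the sparse two-phase rotation environment:
`Q*((s¹;s²),a,g) = γgᵀ(s¹+Ua)/(1-γ²) + γ³‖g‖₂/(1-γ²)²` if `s¹ ≠ 0`, and
`gᵀs²/(1-γ²) + γ²‖g‖₂/(1-γ²)²` if `s¹ = 0`. -/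
noncomputable def Qsparse {d : ℕ} (γ : ℝ) (U : Matrix (Fin d) (Fin d) ℝ)
    (s1 s2 a g : EuclideanSpace ℝ (Fin d)) : ℝ :=
  if s1 = 0 then
    ⟪g, s2⟫ / (1 - γ ^ 2) + γ ^ 2 * ‖g‖ / (1 - γ ^ 2) ^ 2
  else
    γ * ⟪g, s1 + toEuc (U.mulVec a)⟫ / (1 - γ ^ 2) + γ ^ 3 * ‖g‖ / (1 - γ ^ 2) ^ 2

/-!
In the first phase no reward is collected and the next state is `(0; s¹ + Ua)`, so the equation
is a ring identity between the two branches of `Q*`. In the second phase the greedy action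
`Uᵀg/‖g‖` is rotated back by `U` to `g/‖g‖`, which contributes exactly `‖g‖` to the inner product
with `g`; the equation then reduces, with `c = 1 - γ²` and `x = gᵀs²`, to
`x/c + γ²‖g‖/c² = x + γ²(x + ‖g‖)/c + γ⁴‖g‖/c²`.
-/

open Matrix

theorem Matrix.mulVec_transpose_mulVec_of_mem_orthogonalGroup {n R : Type*} [Fintype n]
    [DecidableEq n] [CommRing R] {U : Matrix n n R} (hU : U ∈ orthogonalGroup n R)
    (v : n → R) : U *ᵥ (Uᵀ *ᵥ v) = v := by
  rw [mulVec_mulVec, (mem_orthogonalGroup_iff n R).mp hU, one_mulVec]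

theorem real_inner_inv_norm_smul_self {E : Type*} [NormedAddCommGroup E] [InnerProductSpace ℝ E]
    (x : E) : ⟪x, ‖x‖⁻¹ • x⟫ = ‖x‖ := by
  rw [real_inner_smul_right, real_inner_self_eq_norm_sq]
  rcases eq_or_ne ‖x‖ 0 with h | h
  · simp [h]
  · field_simp

section SparseBellman

variable {d : ℕ} (γ : ℝ) (U : Matrix (Fin d) (Fin d) ℝ)

/-- The optimal policy `π*(s, g)`, which ignores the state. -/
noncomputable def greedyAction (g : EuclideanSpace ℝ (Fin d)) : EuclideanSpace ℝ (Fin d) :=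
  ‖g‖⁻¹ • toEuc (Uᵀ *ᵥ g)

variable {U} in
theorem inner_toEuc_mulVec_greedyAction (hU : U ∈ Matrix.orthogonalGroup (Fin d) ℝ)
    (g : EuclideanSpace ℝ (Fin d)) : ⟪g, toEuc (U *ᵥ greedyAction U g)⟫ = ‖g‖ := by
  have hUg : toEuc (U *ᵥ greedyAction U g) = ‖g‖⁻¹ • g := by
    rw [greedyAction, WithLp.ofLp_smul, Matrix.mulVec_smul]
    exact congrArg (‖g‖⁻¹ • toEuc ·) (Matrix.mulVec_transpose_mulVec_of_mem_orthogonalGroup hU g)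
  rw [hUg, real_inner_inv_norm_smul_self]

theorem Qsparse_zero (s2 a g : EuclideanSpace ℝ (Fin d)) :
    Qsparse γ U 0 s2 a g = ⟪g, s2⟫ / (1 - γ ^ 2) + γ ^ 2 * ‖g‖ / (1 - γ ^ 2) ^ 2 :=
  if_pos rfl

theorem Qsparse_of_ne_zero {s1 : EuclideanSpace ℝ (Fin d)} (hs1 : s1 ≠ 0)
    (s2 a g : EuclideanSpace ℝ (Fin d)) :
    Qsparse γ U s1 s2 a g =
      γ * ⟪g, s1 + toEuc (U *ᵥ a)⟫ / (1 - γ ^ 2) + γ ^ 3 * ‖g‖ / (1 - γ ^ 2) ^ 2 :=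
  if_neg hs1

theorem Qsparse_bellman_of_ne_zero {s1 : EuclideanSpace ℝ (Fin d)} (hs1 : s1 ≠ 0)
    (s2 a a' g : EuclideanSpace ℝ (Fin d)) :
    Qsparse γ U s1 s2 a g = γ * Qsparse γ U 0 (s1 + toEuc (U *ᵥ a)) a' g := by
  rw [Qsparse_of_ne_zero γ U hs1, Qsparse_zero]
  ring

variable {γ U} in
theorem Qsparse_bellman_zero (hγ : γ ^ 2 ≠ 1) (hU : U ∈ Matrix.orthogonalGroup (Fin d) ℝ)
    {s2 : EuclideanSpace ℝ (Fin d)} (hs2 : s2 ≠ 0) (a g : EuclideanSpace ℝ (Fin d)) :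
    Qsparse γ U 0 s2 a g = ⟪g, s2⟫ + γ * Qsparse γ U s2 0 (greedyAction U g) g := by
  have hγ' : 1 - γ ^ 2 ≠ 0 := sub_ne_zero.mpr hγ.symm
  rw [Qsparse_zero, Qsparse_of_ne_zero γ U hs2, inner_add_right,
    inner_toEuc_mulVec_greedyAction hU]
  field_simp
  ring

end SparseBellman

theorem sparse_bellman_fixed_point_general {d : ℕ} (γ : ℝ) (hγ0 : 0 < γ) (hγ1 : γ < 1)
    (U : Matrix (Fin d) (Fin d) ℝ) (hU : U ∈ Matrix.orthogonalGroup (Fin d) ℝ)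
    (g s1 s2 a : EuclideanSpace ℝ (Fin d))
    (hnz : s1 = 0 → s2 ≠ 0) :
    Qsparse γ U s1 s2 a g =
      ⟪g, (if s1 = 0 then s2 else 0 : EuclideanSpace ℝ (Fin d))⟫ +
        γ * Qsparse γ U (if s1 = 0 then s2 else 0)
              (if s1 = 0 then 0 else s1 + toEuc (U.mulVec a))
              (‖g‖⁻¹ • toEuc (U.transpose.mulVec g)) g := by
  by_cases hs1 : s1 = 0
  · subst hs1
    have hγ : γ ^ 2 ≠ 1 := (pow_lt_one₀ hγ0.le hγ1 two_ne_zero).ne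
    simp only [↓reduceIte]
    exact Qsparse_bellman_zero hγ hU (hnz rfl) a g
  · simp only [if_neg hs1, inner_zero_right, zero_add]
    exact Qsparse_bellman_of_ne_zero γ U hs1 s2 a _ g

/-- With `π*(s,g) = Uᵀg/‖g‖₂`, the piecewise `Q*` satisfies the Bellman equation
`Q*(s,a,g) = R(s',g) + γQ*(s',π*(s',g),g)` for the two-phase transition
(`s' = (0; s¹+Ua)` if `s¹ ≠ 0`, else `s' = (s²; 0)`) with reward `R(s,g) = gᵀs¹`. -/
theorem sparse_bellman_fixed_point {d : ℕ} (γ : ℝ) (hγ0 : 0 < γ) (hγ1 : γ < 1)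
    (U : Matrix (Fin d) (Fin d) ℝ) (hU : U ∈ Matrix.orthogonalGroup (Fin d) ℝ)
    (g s1 s2 a : EuclideanSpace ℝ (Fin d)) (hg : g ≠ 0)
    (hnz : s1 = 0 → s2 ≠ 0) :
    Qsparse γ U s1 s2 a g =
      ⟪g, (if s1 = 0 then s2 else 0 : EuclideanSpace ℝ (Fin d))⟫ +
        γ * Qsparse γ U (if s1 = 0 then s2 else 0)
              (if s1 = 0 then 0 else s1 + toEuc (U.mulVec a))
              (‖g‖⁻¹ • toEuc (U.transpose.mulVec g)) g :=
  sparse_bellman_fixed_point_general γ hγ0 hγ1 U hU g s1 s2 a hnz
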